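/- Let G be the graph obtained from the k×k grid graph by adding two additional universal vertices x and y, each adjacent to all grid vertices and to each other. Let A and B be the two bipartition classes of the k×k grid, and set Z₁ := A ∪ {x} and Z₂ := B ∪ {y}. Then the graph G/Z_i obtained by contracting each connected component of G[Z_i] to a single vertex has treewidth at most 2, for both i ∈ {1,2}. -/

import Mathlib

/-!
Contracting `Z = A ∪ {x}` merges all of `Z` into one vertex `z`, since `x` is adjacent to every
vertex of `A`; likewise for `B ∪ {y}`. The remaining vertices are the other apex `w` and the
grid vertices of the other colour class, which are pairwise non-adjacent. Hence `{z, w}` is a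
vertex cover of `G/Z`, and a graph with a vertex cover `S` has the star decomposition with
root bag `S` and a leaf bag `S ∪ {v}` for each vertex `v`, of width `|S|`.
-/

/-- A rooted tree decomposition of a graph `G`.  The rooted tree on the index type `ι` is
given by a parent function together with a root which every node reaches by iterating
`parent`.  The bags satisfy the usual covering, edge and (subtree-)connectivity axioms;
the connectivity axiom is phrased for rooted trees: if `v` lies in the bag of `t` but not
in the bag of its parent (and `t` is not the root), then every node whose bag contains `v`
is a descendant of `t`. -/
structure RootedTreeDecomp (V : Type*) (ι : Type*) (G : SimpleGraph V) where
  parent : ι → ι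
  root : ι
  parent_root : parent root = root
  reaches_root : ∀ t : ι, ∃ n : ℕ, parent^[n] t = root
  bag : ι → Set V
  bag_cover : ∀ v : V, ∃ t : ι, v ∈ bag t
  bag_edge : ∀ ⦃u v : V⦄, G.Adj u v → ∃ t : ι, u ∈ bag t ∧ v ∈ bag t
  bag_conn : ∀ (v : V) (t : ι), v ∈ bag t → t ≠ root → v ∉ bag (parent t) →
      ∀ s : ι, v ∈ bag s → ∃ n : ℕ, parent^[n] s = t

namespace RootedTreeDecomp

variable {V ι : Type*} {G : SimpleGraph V}

open Classical

/-- The adhesion `σ(t) = β(t) ∩ β(parent t)`, with `σ(root) = ∅`. -/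
noncomputable def adhesion (D : RootedTreeDecomp V ι G) (t : ι) : Set V :=
  if t = D.root then ∅ else D.bag t ∩ D.bag (D.parent t)

/-- `s` is a child of `t` in the rooted tree. -/
def IsChild (D : RootedTreeDecomp V ι G) (s t : ι) : Prop :=
  s ≠ D.root ∧ D.parent s = t

/-- The set `γ(t)`: the union of the bags over the subtree rooted at `t`. -/
def subtreeBags (D : RootedTreeDecomp V ι G) (t : ι) : Set V :=
  ⋃ s ∈ {s : ι | ∃ n : ℕ, D.parent^[n] s = t}, D.bag s

/-- The torso of a node `t`: the graph on the bag `β(t)` (as a graph with vertex set `V`,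
with all edges inside `β(t)`) obtained from `G[β(t)]` by making the adhesion `σ(s)` of every
child `s` of `t` into a clique. -/
def torso (D : RootedTreeDecomp V ι G) (t : ι) : SimpleGraph V where
  Adj u v := u ≠ v ∧ u ∈ D.bag t ∧ v ∈ D.bag t ∧
    (G.Adj u v ∨ ∃ s : ι, D.IsChild s t ∧ u ∈ D.adhesion s ∧ v ∈ D.adhesion s)
  symm := by
    refine ⟨?_⟩
    rintro u v ⟨hne, hu, hv, h⟩
    refine ⟨hne.symm, hv, hu, ?_⟩
    rcases h with h | ⟨s, hs, h1, h2⟩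
    · exact Or.inl h.symm
    · exact Or.inr ⟨s, hs, h2, h1⟩
  loopless := ⟨fun u h => h.1 rfl⟩

end RootedTreeDecomp

/-- `G` has treewidth at most `w`: it admits a (rooted) tree decomposition all of whose
bags are finite of cardinality at most `w + 1`. -/
def TreewidthLE.{u_tw} {V : Type*} (G : SimpleGraph V) (w : ℕ) : Prop :=
  ∃ (ι : Type u_tw) (D : RootedTreeDecomp V ι G),
    ∀ t : ι, (D.bag t).Finite ∧ (D.bag t).ncard ≤ w + 1

/-- `u` and `v` lie in the same connected component of `G[Z]`. -/
def ReachIn {V : Type*} (G : SimpleGraph V) (Z : Set V) (u v : V) : Prop :=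
  ∃ (hu : u ∈ Z) (hv : v ∈ Z), (G.induce Z).Reachable ⟨u, hu⟩ ⟨v, hv⟩

/-- `G'` is obtained from `G` by contracting edges, with quotient map `π` : `π` is
surjective, each fibre induces a connected subgraph of `G`, and two distinct vertices of
`G'` are adjacent exactly when some edge of `G` joins the corresponding fibres. -/
def IsContraction {V V' : Type*} (G : SimpleGraph V) (G' : SimpleGraph V') (π : V → V') :
    Prop :=
  Function.Surjective π ∧
  (∀ a : V', (G.induce (π ⁻¹' {a})).Connected) ∧
  (∀ a b : V', G'.Adj a b ↔ a ≠ b ∧ ∃ u v : V, G.Adj u v ∧ π u = a ∧ π v = b)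

/-- `G'` is the graph `G/Z` obtained from `G` by contracting every connected component of
`G[Z]` to a single vertex, with quotient map `π`: additionally to being a contraction, `π`
identifies two vertices exactly when they coincide or lie in the same connected component
of `G[Z]`. -/
def IsComponentContraction {V V' : Type*} (G : SimpleGraph V) (Z : Set V)
    (G' : SimpleGraph V') (π : V → V') : Prop :=
  Function.Surjective π ∧
  (∀ u v : V, π u = π v ↔ u = v ∨ ReachIn G Z u v) ∧
  (∀ a b : V', G'.Adj a b ↔ a ≠ b ∧ ∃ u v : V, G.Adj u v ∧ π u = a ∧ π v = b)

/-- Distance of natural numbers (`|a - b|`). -/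
def natDist (a b : ℕ) : ℕ := max a b - min a b

/-- The `k × k` grid graph together with two universal apex vertices `x = Sum.inr 0` and
`y = Sum.inr 1`, each adjacent to all grid vertices and to each other. -/
def gridApex (k : ℕ) : SimpleGraph ((Fin k × Fin k) ⊕ Fin 2) where
  Adj a b :=
    match a, b with
    | Sum.inl p, Sum.inl q => natDist p.1.val q.1.val + natDist p.2.val q.2.val = 1
    | Sum.inl _, Sum.inr _ => True
    | Sum.inr _, Sum.inl _ => True
    | Sum.inr i, Sum.inr j => i ≠ j
  symm := by
    refine ⟨?_⟩
    rintro (p | i) (q | j) h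
    · simpa [natDist, Nat.max_comm, Nat.min_comm] using h
    · trivial
    · trivial
    · exact h.symm
  loopless := by
    refine ⟨?_⟩
    rintro (p | i) h
    · simp [natDist] at h
    · exact h rfl

/-- The bipartition class `A` of the grid: grid vertices `(i,j)` with `i + j` even. -/
def gridEven (k : ℕ) : Set ((Fin k × Fin k) ⊕ Fin 2) :=
  {x | ∃ p : Fin k × Fin k, x = Sum.inl p ∧ (p.1.val + p.2.val) % 2 = 0}

/-- The bipartition class `B` of the grid: grid vertices `(i,j)` with `i + j` odd. -/
def gridOdd (k : ℕ) : Set ((Fin k × Fin k) ⊕ Fin 2) :=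
  {x | ∃ p : Fin k × Fin k, x = Sum.inl p ∧ (p.1.val + p.2.val) % 2 = 1}

/-- `Z₁ = A ∪ {x}`. -/
def Zone (k : ℕ) : Set ((Fin k × Fin k) ⊕ Fin 2) := gridEven k ∪ {Sum.inr 0}

/-- `Z₂ = B ∪ {y}`. -/
def Ztwo (k : ℕ) : Set ((Fin k × Fin k) ⊕ Fin 2) := gridOdd k ∪ {Sum.inr 1}

open SimpleGraph

theorem TreewidthLE.of_isVertexCover.{u, v} {V : Type v} {G : SimpleGraph V} {S : Finset V}
    (hS : G.IsVertexCover S) {n : ℕ} (hn : S.card ≤ n) : TreewidthLE.{max u v} G n := by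
  classical
  let bag : ULift.{u} (Option V) → Set V := fun t => t.down.elim S fun a => insert a S
  have hroot : ∀ t : ULift.{u} (Option V), t ≠ ⟨none⟩ → ∃ a, t = ⟨some a⟩ := by
    rintro ⟨_ | a⟩ ht
    exacts [absurd rfl ht, ⟨a, rfl⟩]
  refine ⟨ULift (Option V),
    { parent := fun _ => ⟨none⟩
      root := ⟨none⟩
      parent_root := rfl
      reaches_root := fun _ => ⟨1, rfl⟩
      bag := bag
      bag_cover := fun v => ⟨⟨some v⟩, by simp [bag]⟩
      bag_edge := fun a b hab => ?_
      bag_conn := fun v t hvt ht hvS s hvs => ?_ }, fun t => ?_⟩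
  · rcases hS hab with ha | hb
    · exact ⟨⟨some b⟩, by simp [bag, ha]⟩
    · exact ⟨⟨some a⟩, by simp [bag, hb]⟩
  · obtain ⟨a, rfl⟩ := hroot t ht
    obtain ⟨b, rfl⟩ := hroot s (by rintro rfl; exact hvS hvs)
    simp only [bag, Option.elim, Set.mem_insert_iff] at hvt hvs hvS
    exact ⟨0, by simp [← hvt.resolve_right hvS, ← hvs.resolve_right hvS]⟩
  · rcases t with ⟨_ | a⟩
    · exact ⟨S.finite_toSet, by simpa [bag] using hn.trans n.le_succ⟩
    · refine ⟨S.finite_toSet.insert a, ?_⟩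
      simpa [bag, ← Finset.coe_insert] using (S.card_insert_le a).trans (Nat.succ_le_succ hn)

namespace IsComponentContraction

variable {V V' : Type*} {G : SimpleGraph V} {Z : Set V} {G' : SimpleGraph V'} {π : V → V'}

theorem isVertexCover_image (hc : IsComponentContraction G Z G' π) {T : Set V}
    (hT : G.IsVertexCover T) : G'.IsVertexCover (π '' T) := by
  intro a b hab
  obtain ⟨-, u, v, huv, rfl, rfl⟩ := (hc.2.2 a b).1 hab
  exact (hT huv).imp (Set.mem_image_of_mem π) (Set.mem_image_of_mem π)

theorem map_eq_of_mem_of_adj (hc : IsComponentContraction G Z G' π) {u c : V}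
    (hu : u ∈ Z) (hc' : c ∈ Z) (huc : G.Adj u c) : π u = π c := by
  have hadj : (G.induce Z).Adj ⟨u, hu⟩ ⟨c, hc'⟩ := huc
  exact (hc.2.1 u c).2 (Or.inr ⟨hu, hc', hadj.reachable⟩)

end IsComponentContraction

def gridApexSide (k : ℕ) (r : Fin 2) : Set ((Fin k × Fin k) ⊕ Fin 2) :=
  {v | (∃ p : Fin k × Fin k, v = Sum.inl p ∧ (p.1.val + p.2.val) % 2 = r.val) ∨ v = Sum.inr r}

theorem Zone_eq_gridApexSide (k : ℕ) : Zone k = gridApexSide k 0 := by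
  ext v
  simp [Zone, gridEven, gridApexSide, or_comm]

theorem Ztwo_eq_gridApexSide (k : ℕ) : Ztwo k = gridApexSide k 1 := by
  ext v
  simp [Ztwo, gridOdd, gridApexSide, or_comm]

theorem gridApex_adj_parity_ne {k : ℕ} {p q : Fin k × Fin k}
    (h : (gridApex k).Adj (Sum.inl p) (Sum.inl q)) :
    (p.1.val + p.2.val) % 2 ≠ (q.1.val + q.2.val) % 2 := by
  change natDist p.1.val q.1.val + natDist p.2.val q.2.val = 1 at h
  unfold natDist at h
  omega

/-- The grid vertices off the side all have the same parity, so no grid edge joins two of them. -/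
theorem gridApex_isVertexCover_insert_gridApexSide (k : ℕ) (r : Fin 2) :
    (gridApex k).IsVertexCover (insert (Sum.inr (r + 1)) (gridApexSide k r)) := by
  have hinr : ∀ i, Sum.inr i ∈ insert (Sum.inr (r + 1)) (gridApexSide k r) := by
    intro i
    have : i = r + 1 ∨ i = r := by revert i r; decide
    simpa [gridApexSide] using this
  rintro (p | i) (q | j) huv
  · by_contra! h
    simp only [Set.mem_insert_iff, reduceCtorEq, gridApexSide, Set.mem_ofPred_eq,
      Sum.inl.injEq, exists_eq_left', false_or] at h
    have := gridApex_adj_parity_ne huv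
    omega
  · exact Or.inr (hinr j)
  all_goals exact Or.inl (hinr i)

theorem gridApexSide_contraction_treewidth_le_two.{u, v} (k : ℕ) (r : Fin 2) {V' : Type v}
    {G' : SimpleGraph V'} {π : ((Fin k × Fin k) ⊕ Fin 2) → V'}
    (hc : IsComponentContraction (gridApex k) (gridApexSide k r) G' π) :
    TreewidthLE.{max u v} G' 2 := by
  classical
  have hapex : Sum.inr r ∈ gridApexSide k r := Or.inr rfl
  have hcollapse : ∀ u ∈ gridApexSide k r, π u = π (Sum.inr r) := by
    rintro u (⟨p, rfl, hp⟩ | rfl)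
    exacts [hc.map_eq_of_mem_of_adj (Or.inl ⟨p, rfl, hp⟩) hapex trivial, rfl]
  have hcover := hc.isVertexCover_image (gridApex_isVertexCover_insert_gridApexSide k r)
  refine TreewidthLE.of_isVertexCover (S := {π (Sum.inr r), π (Sum.inr (r + 1))})
    (hcover.subset ?_) Finset.card_le_two
  rintro _ ⟨u, rfl | hu, rfl⟩
  · simp
  · simp [hcollapse u hu]

/-- Let `G` be the `k × k` grid with two added universal vertices `x, y`,
let `A, B` be the bipartition classes of the grid, and `Z₁ := A ∪ {x}`, `Z₂ := B ∪ {y}`.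
Then for both `i ∈ {1,2}`, the graph `G/Z_i` obtained by contracting each connected
component of `G[Z_i]` to a single vertex has treewidth at most `2`. -/
theorem gridApex_contraction_treewidth_le_two
    (k : ℕ) (Z : Set ((Fin k × Fin k) ⊕ Fin 2)) (hZ : Z = Zone k ∨ Z = Ztwo k)
    (V' : Type) (G' : SimpleGraph V') (π : ((Fin k × Fin k) ⊕ Fin 2) → V')
    (hc : IsComponentContraction (gridApex k) Z G' π) :
    TreewidthLE G' 2 := by
  rcases hZ with rfl | rfl
  · exact gridApexSide_contraction_treewidth_le_two k 0 (Zone_eq_gridApexSide k ▸ hc)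
  · exact gridApexSide_contraction_treewidth_le_two k 1 (Ztwo_eq_gridApexSide k ▸ hc)
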